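/- Let y : [0,∞) → E be a nonconformity flow trajectory with S(y(0)) ≠ τ. Then for every t ≥ 0 the score error never vanishes, S(y(t)) ≠ τ, the sign of S(y(t)) − τ equals the sign of S(y(0)) − τ, and t ↦ |S(y(t)) − τ| is strictly decreasing; in particular points outside the sublevel set {S ≤ τ} are pushed inward and points strictly inside are pushed outward, monotonically toward the level set {S = τ}. -/

import Mathlib

/-!
Along the flow the score error `e(t) = S(y(t)) - τ` obeys the linear ODE `e' = ⟪∇S, v⟫ = -λ e`,
because `v` is `∇S` rescaled so that its component along `∇S` is exactly `-λ e`. Hence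
`e(t) = e(0) e^{-λt}`: it never vanishes, keeps its sign, and `|e(t)| = |e(0)| e^{-λt}` strictly
decreases.
-/

open scoped RealInnerProductSpace

/-- The nonconformity velocity field
`v(y) = -λ (S y - τ) ∇S(y) / ‖∇S(y)‖²`. -/
noncomputable def ncVel {n : ℕ} (S : EuclideanSpace ℝ (Fin n) → ℝ) (τ lam : ℝ)
    (y : EuclideanSpace ℝ (Fin n)) : EuclideanSpace ℝ (Fin n) :=
  (-lam * (S y - τ) / ‖gradient S y‖ ^ 2) • gradient S y

open Real Set

theorem inner_gradient_ncVel {n : ℕ} (S : EuclideanSpace ℝ (Fin n) → ℝ) (τ lam : ℝ)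
    {x : EuclideanSpace ℝ (Fin n)} (hx : gradient S x ≠ 0) :
    ⟪gradient S x, ncVel S τ lam x⟫ = -lam * (S x - τ) := by
  have hnorm : ‖gradient S x‖ ≠ 0 := norm_ne_zero_iff.mpr hx
  simp only [ncVel, real_inner_smul_right, real_inner_self_eq_norm_sq]
  field_simp

theorem hasDerivAt_score_error {n : ℕ} {S : EuclideanSpace ℝ (Fin n) → ℝ} {τ lam t : ℝ}
    {y : ℝ → EuclideanSpace ℝ (Fin n)} (hS : DifferentiableAt ℝ S (y t))
    (hy : HasDerivAt y (ncVel S τ lam (y t)) t) (hgrad : gradient S (y t) ≠ 0) :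
    HasDerivAt (fun s => S (y s) - τ) (-lam * (S (y t) - τ)) t := by
  have hcomp := hS.hasGradientAt.hasFDerivAt.comp_hasDerivAt t hy
  rw [InnerProductSpace.toDual_apply_apply, inner_gradient_ncVel S τ lam hgrad] at hcomp
  exact hcomp.sub_const τ

theorem eq_mul_exp_of_hasDerivAt_const_mul {g : ℝ → ℝ} {c : ℝ}
    (hg : ∀ t, 0 ≤ t → HasDerivAt g (c * g t) t) {t : ℝ} (ht : 0 ≤ t) :
    g t = g 0 * exp (c * t) := by
  set f : ℝ → ℝ := fun s => g s * exp (-(c * s))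
  have hf : ∀ s, 0 ≤ s → HasDerivAt f 0 s := by
    intro s hs
    have hexp : HasDerivAt (fun s => exp (-(c * s))) (exp (-(c * s)) * -c) s :=
      ((hasDerivAt_id s).const_mul c).neg.exp.congr_deriv (by simp)
    exact ((hg s hs).mul hexp).congr_deriv (by ring)
  have hconst : f t = f 0 :=
    constant_of_has_deriv_right_zero
      (fun s hs => (hf s hs.1).continuousAt.continuousWithinAt)
      (fun s hs => (hf s hs.1).hasDerivWithinAt) t (right_mem_Icc.mpr ht)
  simp only [f, mul_zero, neg_zero, exp_zero, mul_one] at hconst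
  rw [← hconst, mul_assoc, ← exp_add, neg_add_cancel, exp_zero, mul_one]

theorem Real.sign_mul_of_pos (a : ℝ) {b : ℝ} (hb : 0 < b) : Real.sign (a * b) = Real.sign a := by
  rcases lt_trichotomy a 0 with ha | rfl | ha
  · rw [sign_of_neg ha, sign_of_neg (mul_neg_of_neg_of_pos ha hb)]
  · rw [zero_mul]
  · rw [sign_of_pos ha, sign_of_pos (mul_pos ha hb)]

theorem strictAnti_abs_mul_exp_neg_mul {a lam : ℝ} (ha : a ≠ 0) (hlam : 0 < lam) :
    StrictAnti fun t => |a * exp (-lam * t)| := by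
  intro u v huv
  simp only [abs_mul, abs_exp]
  exact mul_lt_mul_of_pos_left (exp_lt_exp.mpr (by nlinarith)) (abs_pos.mpr ha)

/-- if `S(y(0)) ≠ τ`, the score error never vanishes, keeps
its initial sign, and `t ↦ |S(y(t)) - τ|` is strictly decreasing on `[0,∞)`:
the flow pushes points monotonically toward the level set `{S = τ}`. -/
theorem score_controlling_monotone {n : ℕ} (S : EuclideanSpace ℝ (Fin n) → ℝ)
    (hS : Differentiable ℝ S) (τ lam : ℝ) (hlam : 0 < lam)
    (y : ℝ → EuclideanSpace ℝ (Fin n))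
    (hy : ∀ t : ℝ, 0 ≤ t → HasDerivAt y (ncVel S τ lam (y t)) t)
    (hgrad : ∀ t : ℝ, 0 ≤ t → gradient S (y t) ≠ 0)
    (h0 : S (y 0) ≠ τ) :
    (∀ t : ℝ, 0 ≤ t → S (y t) ≠ τ) ∧
      (∀ t : ℝ, 0 ≤ t →
        Real.sign (S (y t) - τ) = Real.sign (S (y 0) - τ)) ∧
      StrictAntiOn (fun t => |S (y t) - τ|) (Set.Ici (0 : ℝ)) := by
  have hsol : ∀ t, 0 ≤ t → S (y t) - τ = (S (y 0) - τ) * exp (-lam * t) :=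
    fun t ht => eq_mul_exp_of_hasDerivAt_const_mul
      (fun s hs => hasDerivAt_score_error (hS _) (hy s hs) (hgrad s hs)) ht
  have he0 : S (y 0) - τ ≠ 0 := sub_ne_zero.mpr h0
  refine ⟨fun t ht => ?_, fun t ht => ?_, ?_⟩
  · rw [← sub_ne_zero, hsol t ht]
    exact mul_ne_zero he0 (exp_pos _).ne'
  · rw [hsol t ht, Real.sign_mul_of_pos _ (exp_pos _)]
  · intro u hu v hv huv
    simp only [hsol u hu, hsol v hv]
    exact strictAnti_abs_mul_exp_neg_mul he0 hlam huv
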